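/- Let Φ be a monotone NAE-3-SAT instance in which each variable occurs in exactly four clauses, and let G(Φ)=(V,E) be the graph constructed from Φ. Then |V| = 16n + 3m + 1, |E| = 32n + 6m, and the edge set of G(Φ) can be partitioned into two spanning trees. -/

import Mathlib

namespace PackingRainbowStmt3

/-- An edge of the multigraph connects via set `F`: there is an edge in `F` with
endpoints `a` and `b`. -/
def Step {V E : Type*} (ends : E → Sym2 V) (F : Set E) (a b : V) : Prop :=
  ∃ e ∈ F, ends e = s(a, b)

/-- The edge set `F` makes the multigraph with endpoint map `ends` connected
(any two vertices are joined by a walk using edges of `F`). -/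
def Connects {V E : Type*} (ends : E → Sym2 V) (F : Set E) : Prop :=
  ∀ a b : V, Relation.ReflTransGen (Step ends F) a b

/-- `F` is a spanning tree: it connects all vertices, minimally so. -/
def IsSpanningTree {V E : Type*} (ends : E → Sym2 V) (F : Set E) : Prop :=
  Connects ends F ∧ ∀ e ∈ F, ¬ Connects ends (F \ {e})

/-- `F` is rainbow: each color class contains at most one edge of `F`. -/
def Rainbow {E C : Type*} (color : E → C) (F : Set E) : Prop :=
  ∀ e ∈ F, ∀ f ∈ F, color e = color f → e = f

/-- A monotone NAE-3-SAT instance with `n` variables and `m` clauses in which every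
clause contains three distinct variables and every variable occurs in exactly four
clauses.  `occ (j, q) = (i, p)` means that the `q`-th variable of clause `j` is the
variable `i`, and that this is the `p`-th occurrence of `i` in the order of the
clauses.  Bijectivity of `occ` encodes that every variable occurs exactly four times. -/
structure NAE4Instance (n m : ℕ) where
  occ : (Fin m × Fin 3) ≃ (Fin n × Fin 4)
  distinct : ∀ j : Fin m, Function.Injective fun q : Fin 3 => (occ (j, q)).1
  mono : ∀ j q j' q', (occ (j, q)).1 = (occ (j', q')).1 →
    Prod.Lex (· < ·) (· < ·) (j, q) (j', q') → (occ (j, q)).2 < (occ (j', q')).2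

/-- `Φ` has a not-all-equal truth assignment: every clause contains
at least one true and at least one false variable. -/
def HasNAEAssignment {n m : ℕ} (Φ : NAE4Instance n m) : Prop :=
  ∃ a : Fin n → Bool, ∀ j : Fin m,
    (∃ q : Fin 3, a (Φ.occ (j, q)).1 = true) ∧ (∃ q : Fin 3, a (Φ.occ (j, q)).1 = false)

/-- Vertices of the graph `G(Φ)`: for every variable `i` and `p ∈ [4]` the four
vertices `u i p, v i p, w i p, z i p` of a `K₄`; for every clause `j` the triangle
vertices `c j q`; and the extra vertex `r`. -/
inductive Vtx (n m : ℕ) where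
  | u (i : Fin n) (p : Fin 4)
  | v (i : Fin n) (p : Fin 4)
  | w (i : Fin n) (p : Fin 4)
  | z (i : Fin n) (p : Fin 4)
  | c (j : Fin m) (q : Fin 3)
  | r
  deriving DecidableEq, Fintype

/-- Edges of `G(Φ)`: the six edges of each `K₄`; the triangle edges
`c j q — c j (q+1)`; the edges `z^{i_q}_ℓ — c j q`; and two parallel
edges between `r` and each `u i p`. -/
inductive Edg (n m : ℕ) where
  | uv (i : Fin n) (p : Fin 4)
  | uw (i : Fin n) (p : Fin 4)
  | uz (i : Fin n) (p : Fin 4)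
  | vw (i : Fin n) (p : Fin 4)
  | vz (i : Fin n) (p : Fin 4)
  | wz (i : Fin n) (p : Fin 4)
  | tri (j : Fin m) (q : Fin 3)
  | zc (j : Fin m) (q : Fin 3)
  | ru (i : Fin n) (p : Fin 4) (b : Fin 2)
  deriving DecidableEq, Fintype

/-- The colors of the edge-coloring of `G(Φ)`. -/
inductive Col (n m : ℕ) where
  | rpar (i : Fin n) (p : Fin 4)
  | ca (i : Fin n) (p : Fin 4)
  | cb (i : Fin n) (p : Fin 4)
  | cc (i : Fin n) (p : Fin 4)
  | cd (i : Fin n) (p : Fin 4)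
  deriving DecidableEq, Fintype

/-- Endpoints of the edges of `G(Φ)`. -/
def ends {n m : ℕ} (Φ : NAE4Instance n m) : Edg n m → Sym2 (Vtx n m)
  | .uv i p => s(.u i p, .v i p)
  | .uw i p => s(.u i p, .w i p)
  | .uz i p => s(.u i p, .z i p)
  | .vw i p => s(.v i p, .w i p)
  | .vz i p => s(.v i p, .z i p)
  | .wz i p => s(.w i p, .z i p)
  | .tri j q => s(.c j q, .c j (q + 1))
  | .zc j q => s(.z (Φ.occ (j, q)).1 (Φ.occ (j, q)).2, .c j q)
  | .ru i p _ => s(.r, .u i p)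

/-- The edge-coloring of `G(Φ)`: the two parallel edges at `r` to `u i p` form the
class `rpar i p`; the classes corresponding to variable `i` and `p ∈ [4]` are
`ca i p = {w^i_p z^i_p, z^i_p c^{j_p}_{q_p}}`, `cb i p = {v^i_p z^i_p, u^i_{p+1} v^i_{p+1}}`,
`cc i p = {u^i_p z^i_p, v^i_p w^i_p}` and `cd i p = {u^i_p w^i_p, c^{j_p}_{q_p} c^{j_p}_{q_p+1}}`,
where `c^{j_p}_{q_p}` is the triangle neighbor of `z^i_p`, i.e. `(j_p, q_p) = Φ.occ.symm (i, p)`. -/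
def color {n m : ℕ} (Φ : NAE4Instance n m) : Edg n m → Col n m
  | .ru i p _ => .rpar i p
  | .wz i p => .ca i p
  | .zc j q => .ca (Φ.occ (j, q)).1 (Φ.occ (j, q)).2
  | .vz i p => .cb i p
  | .uv i p => .cb i (p - 1)
  | .uz i p => .cc i p
  | .vw i p => .cc i p
  | .uw i p => .cd i p
  | .tri j q => .cd (Φ.occ (j, q)).1 (Φ.occ (j, q)).2

/-- The edge set of `G(Φ)` can be partitioned into the two rainbow
spanning trees `T₁` and `T₂`. -/
def TwoRainbowSpanningTrees {n m : ℕ} (Φ : NAE4Instance n m) (T₁ T₂ : Set (Edg n m)) : Prop :=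
  T₁ ∪ T₂ = Set.univ ∧ Disjoint T₁ T₂ ∧
    IsSpanningTree (ends Φ) T₁ ∧ IsSpanningTree (ends Φ) T₂ ∧
    Rainbow (color Φ) T₁ ∧ Rainbow (color Φ) T₂

/-!
Both trees are described by parent pointers towards `r`: every vertex `x ≠ r` gets exactly one
edge to a parent of strictly smaller depth. Such an edge set connects everything (follow the
parents to `r`), and it is minimally connected, since after deleting the parent edge of `x` the
descendants of `x` are closed under the remaining edges.

The first tree uses one copy of each edge `r u`, the path `u v w z` in every `K₄`, and in every
clause triangle the edges `z c₀`, `z c₁` and `c₂ c₀`. The second tree uses the other copy of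
`r u`, the edges `u w`, `u z`, `z v`, and the path `c₀ c₁ c₂ z`; together they use every edge
exactly once.
-/

section ParentTree

variable {V E : Type*}

instance (ends : E → Sym2 V) (F : Set E) : Std.Symm (Step ends F) where
  symm _ _ := fun ⟨e, he, hends⟩ => ⟨e, he, hends.trans Sym2.eq_swap⟩

def ParentStep (r : V) (parent : V → V) (a b : V) : Prop :=
  a ≠ r ∧ parent a = b

variable (ends : E → Sym2 V) {r : V} {parent : V → V} {depth : V → ℕ}
  {parentEdge : {v // v ≠ r} → E}

theorem depth_le_of_reflTransGen_parentStep
    (h_depth : ∀ v, v ≠ r → depth (parent v) < depth v) {a b : V}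
    (h : Relation.ReflTransGen (ParentStep r parent) a b) : depth b ≤ depth a := by
  induction h with
  | refl => rfl
  | tail _ hstep ih => exact (hstep.2 ▸ h_depth _ hstep.1).le.trans ih

theorem reflTransGen_parentStep_iff_parent {x v : V} (hvr : v ≠ r) (hvx : v ≠ x) :
    Relation.ReflTransGen (ParentStep r parent) v x ↔
      Relation.ReflTransGen (ParentStep r parent) (parent v) x := by
  refine ⟨fun h => ?_, .head ⟨hvr, rfl⟩⟩
  obtain rfl | ⟨b, ⟨-, rfl⟩, hb⟩ := h.cases_head
  · exact absurd rfl hvx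
  · exact hb

theorem reflTransGen_step_root
    (h_ends : ∀ v, ends (parentEdge v) = s(parent v.1, v.1))
    (h_depth : ∀ v, v ≠ r → depth (parent v) < depth v) (a : V) :
    Relation.ReflTransGen (Step ends (Set.range parentEdge)) a r := by
  induction a using WellFounded.induction (measure depth).wf with | _ v ih
  by_cases hv : v = r
  · rw [hv]
  · exact .head ⟨parentEdge ⟨v, hv⟩, ⟨_, rfl⟩, (h_ends _).trans Sym2.eq_swap⟩
      (ih _ (h_depth v hv))

theorem not_connects_diff_parentEdge
    (h_ends : ∀ v, ends (parentEdge v) = s(parent v.1, v.1))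
    (h_depth : ∀ v, v ≠ r → depth (parent v) < depth v) (x : {v // v ≠ r}) :
    ¬ Connects ends (Set.range parentEdge \ {parentEdge x}) := by
  set IsDesc : V → Prop := fun w => Relation.ReflTransGen (ParentStep r parent) w x
  have h_walk : ∀ a b, Relation.ReflTransGen (Step ends (Set.range parentEdge \ {parentEdge x}))
      a b → (IsDesc a ↔ IsDesc b) := by
    intro a b h
    induction h with
    | refl => rfl
    | tail _ hstep ih =>
      obtain ⟨_, ⟨⟨y, rfl⟩, hyx⟩, hends⟩ := hstep
      have hy : y.1 ≠ x.1 := fun h => hyx (congrArg parentEdge (Subtype.ext h))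
      have := reflTransGen_parentStep_iff_parent (parent := parent) y.2 hy
      rw [h_ends] at hends
      rcases Sym2.eq_iff.mp hends with ⟨rfl, rfl⟩ | ⟨rfl, rfl⟩
      · exact ih.trans this.symm
      · exact ih.trans this
  intro hconn
  have h_parent : IsDesc (parent x) := (h_walk _ _ (hconn x (parent x))).mp .refl
  exact absurd (depth_le_of_reflTransGen_parentStep h_depth h_parent) (h_depth x x.2).not_ge

theorem isSpanningTree_range_parentEdge
    (h_ends : ∀ v, ends (parentEdge v) = s(parent v.1, v.1))
    (h_depth : ∀ v, v ≠ r → depth (parent v) < depth v) :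
    IsSpanningTree ends (Set.range parentEdge) := by
  refine ⟨fun a b => ?_, ?_⟩
  · exact (reflTransGen_step_root ends h_ends h_depth a).trans
      (Std.Symm.symm _ _ (reflTransGen_step_root ends h_ends h_depth b))
  · rintro _ ⟨x, rfl⟩
    exact not_connects_diff_parentEdge ends h_ends h_depth x

end ParentTree

section Counting

variable (n m : ℕ)

def vtxEquiv : Vtx n m ≃ (Fin 4 × Fin n × Fin 4) ⊕ (Fin m × Fin 3) ⊕ Unit where
  toFun
    | .u i p => .inl (0, i, p)
    | .v i p => .inl (1, i, p)
    | .w i p => .inl (2, i, p)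
    | .z i p => .inl (3, i, p)
    | .c j q => .inr (.inl (j, q))
    | .r => .inr (.inr ())
  invFun
    | .inl (0, i, p) => .u i p
    | .inl (1, i, p) => .v i p
    | .inl (2, i, p) => .w i p
    | .inl (3, i, p) => .z i p
    | .inr (.inl (j, q)) => .c j q
    | .inr (.inr ()) => .r
  left_inv := by rintro ⟨⟩ <;> rfl
  right_inv := by rintro (⟨k, i, p⟩ | ⟨j, q⟩ | ⟨⟩) <;> (try fin_cases k) <;> rfl

def edgEquiv :
    Edg n m ≃ (Fin 6 × Fin n × Fin 4) ⊕ (Fin 2 × Fin m × Fin 3) ⊕ (Fin n × Fin 4 × Fin 2) where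
  toFun
    | .uv i p => .inl (0, i, p)
    | .uw i p => .inl (1, i, p)
    | .uz i p => .inl (2, i, p)
    | .vw i p => .inl (3, i, p)
    | .vz i p => .inl (4, i, p)
    | .wz i p => .inl (5, i, p)
    | .tri j q => .inr (.inl (0, j, q))
    | .zc j q => .inr (.inl (1, j, q))
    | .ru i p b => .inr (.inr (i, p, b))
  invFun
    | .inl (0, i, p) => .uv i p
    | .inl (1, i, p) => .uw i p
    | .inl (2, i, p) => .uz i p
    | .inl (3, i, p) => .vw i p
    | .inl (4, i, p) => .vz i p
    | .inl (5, i, p) => .wz i p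
    | .inr (.inl (0, j, q)) => .tri j q
    | .inr (.inl (1, j, q)) => .zc j q
    | .inr (.inr (i, p, b)) => .ru i p b
  left_inv := by rintro ⟨⟩ <;> rfl
  right_inv := by rintro (⟨k, i, p⟩ | ⟨k, j, q⟩ | ⟨i, p, b⟩) <;> (try fin_cases k) <;> rfl

theorem card_vtx : Fintype.card (Vtx n m) = 16 * n + 3 * m + 1 := by
  simp only [Fintype.card_congr (vtxEquiv n m), Fintype.card_sum, Fintype.card_prod,
    Fintype.card_fin, Fintype.card_unit]
  ring

theorem card_edg : Fintype.card (Edg n m) = 32 * n + 6 * m := by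
  simp only [Fintype.card_congr (edgEquiv n m), Fintype.card_sum, Fintype.card_prod,
    Fintype.card_fin]
  ring

end Counting

section Trees

variable {n m : ℕ}

def IsFirstTreeEdge : Edg n m → Prop
  | .ru _ _ b => b = 0
  | .uv _ _ | .vw _ _ | .wz _ _ => True
  | .uw _ _ | .uz _ _ | .vz _ _ => False
  | .zc _ q => q ≠ 2
  | .tri _ q => q = 2

def firstParent (Φ : NAE4Instance n m) : Vtx n m → Vtx n m
  | .r | .u _ _ => .r
  | .v i p => .u i p
  | .w i p => .v i p
  | .z i p => .w i p
  | .c j 0 => .z (Φ.occ (j, 0)).1 (Φ.occ (j, 0)).2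
  | .c j 1 => .z (Φ.occ (j, 1)).1 (Φ.occ (j, 1)).2
  | .c j 2 => .c j 0

def firstDepth : Vtx n m → ℕ
  | .r => 0
  | .u _ _ => 1
  | .v _ _ => 2
  | .w _ _ => 3
  | .z _ _ => 4
  | .c _ 0 | .c _ 1 => 5
  | .c _ 2 => 6

def firstParentEdge : {v : Vtx n m // v ≠ .r} → Edg n m
  | ⟨.u i p, _⟩ => .ru i p 0
  | ⟨.v i p, _⟩ => .uv i p
  | ⟨.w i p, _⟩ => .vw i p
  | ⟨.z i p, _⟩ => .wz i p
  | ⟨.c j 0, _⟩ => .zc j 0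
  | ⟨.c j 1, _⟩ => .zc j 1
  | ⟨.c j 2, _⟩ => .tri j 2
  | ⟨.r, h⟩ => absurd rfl h

def secondParent (Φ : NAE4Instance n m) : Vtx n m → Vtx n m
  | .r | .u _ _ => .r
  | .w i p | .z i p => .u i p
  | .v i p => .z i p
  | .c j 0 => .c j 1
  | .c j 1 => .c j 2
  | .c j 2 => .z (Φ.occ (j, 2)).1 (Φ.occ (j, 2)).2

def secondDepth : Vtx n m → ℕ
  | .r => 0
  | .u _ _ => 1
  | .w _ _ | .z _ _ => 2
  | .v _ _ => 3
  | .c _ 2 => 3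
  | .c _ 1 => 4
  | .c _ 0 => 5

def secondParentEdge : {v : Vtx n m // v ≠ .r} → Edg n m
  | ⟨.u i p, _⟩ => .ru i p 1
  | ⟨.w i p, _⟩ => .uw i p
  | ⟨.z i p, _⟩ => .uz i p
  | ⟨.v i p, _⟩ => .vz i p
  | ⟨.c j 0, _⟩ => .tri j 0
  | ⟨.c j 1, _⟩ => .tri j 1
  | ⟨.c j 2, _⟩ => .zc j 2
  | ⟨.r, h⟩ => absurd rfl h

theorem setOf_isFirstTreeEdge_eq_range :
    {e : Edg n m | IsFirstTreeEdge e} = Set.range firstParentEdge := by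
  ext e
  constructor
  · intro he
    cases e with
    | ru i p b => obtain rfl : b = 0 := he; exact ⟨⟨.u i p, nofun⟩, rfl⟩
    | uv i p => exact ⟨⟨.v i p, nofun⟩, rfl⟩
    | vw i p => exact ⟨⟨.w i p, nofun⟩, rfl⟩
    | wz i p => exact ⟨⟨.z i p, nofun⟩, rfl⟩
    | zc j q =>
      refine ⟨⟨.c j q, nofun⟩, ?_⟩
      fin_cases q <;> first | rfl | simp [IsFirstTreeEdge] at he
    | tri j q => obtain rfl : q = 2 := he; exact ⟨⟨.c j 2, nofun⟩, rfl⟩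
    | _ => exact he.elim
  · rintro ⟨⟨v, hv⟩, rfl⟩
    cases v with
    | r => exact absurd rfl hv
    | c j q => fin_cases q <;> simp [firstParentEdge, IsFirstTreeEdge]
    | _ => trivial

theorem setOf_not_isFirstTreeEdge_eq_range :
    {e : Edg n m | ¬ IsFirstTreeEdge e} = Set.range secondParentEdge := by
  ext e
  constructor
  · intro he
    cases e with
    | ru i p b =>
      fin_cases b <;> first | exact ⟨⟨.u i p, nofun⟩, rfl⟩ | simp [IsFirstTreeEdge] at he
    | uw i p => exact ⟨⟨.w i p, nofun⟩, rfl⟩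
    | uz i p => exact ⟨⟨.z i p, nofun⟩, rfl⟩
    | vz i p => exact ⟨⟨.v i p, nofun⟩, rfl⟩
    | zc j q =>
      fin_cases q <;> first | exact ⟨⟨.c j 2, nofun⟩, rfl⟩ | simp [IsFirstTreeEdge] at he
    | tri j q =>
      refine ⟨⟨.c j q, nofun⟩, ?_⟩
      fin_cases q <;> first | rfl | simp [IsFirstTreeEdge] at he
    | _ => exact absurd trivial he
  · rintro ⟨⟨v, hv⟩, rfl⟩
    cases v with
    | r => exact absurd rfl hv
    | c j q => fin_cases q <;> simp [secondParentEdge, IsFirstTreeEdge]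
    | _ => simp [secondParentEdge, IsFirstTreeEdge]

theorem isSpanningTree_setOf_isFirstTreeEdge (Φ : NAE4Instance n m) :
    IsSpanningTree (ends Φ) {e | IsFirstTreeEdge e} := by
  rw [setOf_isFirstTreeEdge_eq_range]
  refine isSpanningTree_range_parentEdge (ends Φ) (parent := firstParent Φ)
    (depth := firstDepth) (fun ⟨v, hv⟩ => ?_) fun v hv => ?_
  · cases v with
    | r => exact absurd rfl hv
    | c j q => fin_cases q <;> first | rfl | exact Sym2.eq_swap
    | _ => rfl
  · cases v with
    | r => exact absurd rfl hv
    | c j q => fin_cases q <;> simp [firstParent, firstDepth]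
    | _ => simp [firstParent, firstDepth]

theorem isSpanningTree_setOf_not_isFirstTreeEdge (Φ : NAE4Instance n m) :
    IsSpanningTree (ends Φ) {e | ¬ IsFirstTreeEdge e} := by
  rw [setOf_not_isFirstTreeEdge_eq_range]
  refine isSpanningTree_range_parentEdge (ends Φ) (parent := secondParent Φ)
    (depth := secondDepth) (fun ⟨v, hv⟩ => ?_) fun v hv => ?_
  · cases v with
    | r => exact absurd rfl hv
    | c j q => fin_cases q <;> first | rfl | exact Sym2.eq_swap
    | v => exact Sym2.eq_swap
    | _ => rfl
  · cases v with
    | r => exact absurd rfl hv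
    | c j q => fin_cases q <;> simp [secondParent, secondDepth]
    | _ => simp [secondParent, secondDepth]

end Trees

/-- The graph `G(Φ)` has `16n + 3m + 1` vertices, `32n + 6m` edges,
and its edge set can be partitioned into two spanning trees. -/
theorem card_and_two_spanning_trees {n m : ℕ} (Φ : NAE4Instance n m) :
    Fintype.card (Vtx n m) = 16 * n + 3 * m + 1 ∧
    Fintype.card (Edg n m) = 32 * n + 6 * m ∧
    ∃ T₁ T₂ : Set (Edg n m), T₁ ∪ T₂ = Set.univ ∧ Disjoint T₁ T₂ ∧
      IsSpanningTree (ends Φ) T₁ ∧ IsSpanningTree (ends Φ) T₂ :=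
  ⟨card_vtx n m, card_edg n m, {e | IsFirstTreeEdge e}, {e | ¬ IsFirstTreeEdge e},
    Set.union_compl_self _, disjoint_compl_right,
    isSpanningTree_setOf_isFirstTreeEdge Φ, isSpanningTree_setOf_not_isFirstTreeEdge Φ⟩

end PackingRainbowStmt3
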